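/- Let P be an invertible n×n complex matrix and let A, B be n×n complex matrices such that A P = P B and Pᴴ A = B Pᴴ. Then U = (P Pᴴ)^{-1/2} P is a unitary matrix satisfying A U = U B. -/

import Mathlib

open Matrix
open scoped ComplexOrder

/-- The positive semidefinite square root of a positive semidefinite matrix
(the definition `Matrix.PosSemidef.sqrt` of the older Mathlib, since removed). -/
noncomputable def Matrix.PosSemidef.sqrt {n 𝕜 : Type*} [Fintype n] [RCLike 𝕜] [DecidableEq n]
    {A : Matrix n n 𝕜} (hA : A.PosSemidef) : Matrix n n 𝕜 :=
  hA.1.eigenvectorUnitary.1 * diagonal ((↑) ∘ (Real.sqrt ·) ∘ hA.1.eigenvalues) *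
    (star hA.1.eigenvectorUnitary : Matrix n n 𝕜)

/-!
From `A P = P B` and `Pᴴ A = B Pᴴ` we get `A (P Pᴴ) = P B Pᴴ = (P Pᴴ) A`. The square root
`S` of `P Pᴴ` is `√` applied to `P Pᴴ` by the continuous functional calculus, so `A` commutes
with `S` and hence with `S⁻¹`, which gives `A S⁻¹ P = S⁻¹ A P = S⁻¹ P B`. Unitarity only uses
that `S` is Hermitian, invertible and `S² = P Pᴴ`.
-/

namespace Matrix

section Sqrt

variable {n 𝕜 : Type*} [Fintype n] [DecidableEq n] [RCLike 𝕜] {A : Matrix n n 𝕜}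

theorem PosSemidef.sqrt_eq_cfc (hA : A.PosSemidef) : hA.sqrt = cfc Real.sqrt A :=
  (hA.1.cfc_eq _).symm

theorem PosSemidef.sqrt_mul_sqrt (hA : A.PosSemidef) : hA.sqrt * hA.sqrt = A := by
  rw [hA.sqrt_eq_cfc, ← cfc_mul Real.sqrt Real.sqrt A]
  conv_rhs => rw [← cfc_id' ℝ A hA.1]
  refine cfc_congr fun x hx => ?_
  obtain ⟨i, rfl⟩ := hA.1.spectrum_real_eq_range_eigenvalues ▸ hx
  exact Real.mul_self_sqrt (hA.eigenvalues_nonneg i)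

theorem PosSemidef.isHermitian_sqrt (hA : A.PosSemidef) : hA.sqrt.IsHermitian :=
  hA.sqrt_eq_cfc ▸ cfc_predicate Real.sqrt A

theorem PosSemidef.commute_sqrt_of_commute {B : Matrix n n 𝕜} (hA : A.PosSemidef)
    (h : Commute A B) : Commute hA.sqrt B :=
  hA.sqrt_eq_cfc ▸ h.cfc_real Real.sqrt

end Sqrt

variable {n α : Type*} [Fintype n] [DecidableEq n] [CommRing α]

theorem commute_nonsing_inv_left {S A : Matrix n n α} (h : Commute S A) : Commute S⁻¹ A := by
  by_cases hS : IsUnit S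
  · rw [← hS.unit_spec, ← coe_units_inv]
    exact h.units_inv_left
  · rw [nonsing_inv_eq_ringInverse, Ring.inverse_non_unit S hS]
    exact Commute.zero_left A

theorem IsHermitian.inv_mul_mem_unitaryGroup [StarRing α] {S P : Matrix n n α}
    (hSH : S.IsHermitian) (hS : IsUnit S) (hSS : S * S = P * Pᴴ) :
    S⁻¹ * P ∈ unitaryGroup n α := by
  have hSdet : IsUnit S.det := (isUnit_iff_isUnit_det S).mp hS
  rw [mem_unitaryGroup_iff, star_eq_conjTranspose, conjTranspose_mul, conjTranspose_nonsing_inv,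
    hSH.eq]
  calc S⁻¹ * P * (Pᴴ * S⁻¹) = S⁻¹ * (S * S) * S⁻¹ := by rw [hSS]; noncomm_ring
    _ = (S⁻¹ * S) * (S * S⁻¹) := by noncomm_ring
    _ = 1 := by rw [nonsing_inv_mul S hSdet, mul_nonsing_inv S hSdet, one_mul]

end Matrix

theorem unitary_part_intertwines (n : ℕ) (P A B : Matrix (Fin n) (Fin n) ℂ)
    (hP : IsUnit P) (h1 : A * P = P * B) (h2 : Pᴴ * A = B * Pᴴ) :
    let U := ((Matrix.posSemidef_self_mul_conjTranspose P).sqrt)⁻¹ * P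
    U * Uᴴ = 1 ∧ A * U = U * B := by
  intro U
  set hPP := posSemidef_self_mul_conjTranspose P
  have hS : IsUnit hPP.sqrt :=
    isUnit_of_mul_isUnit_left (hPP.sqrt_mul_sqrt ▸ hP.mul hP.star)
  have hcomm : Commute (P * Pᴴ) A := SemiconjBy.mul_left h1.symm h2
  have hinv : Commute hPP.sqrt⁻¹ A :=
    commute_nonsing_inv_left (hPP.commute_sqrt_of_commute hcomm)
  exact ⟨mem_unitaryGroup_iff.mp <| hPP.isHermitian_sqrt.inv_mul_mem_unitaryGroup hS
    hPP.sqrt_mul_sqrt, (SemiconjBy.mul_left hinv h1.symm).symm⟩
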